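/- arXiv:1510.02197 — 3 statements merged into one kernel-verified Lean document; each statement's English description precedes it below -/
import Mathlib

section
/- Let G be a connected graph whose edge set is partitioned into biconnected components, and let Q be a symmetric cost matrix such that Q = A + Aᵀ + D where D is diagonal and A = (a(i,j)) satisfies a(i,j) = a(i,k) whenever edges j and k lie in the same biconnected component. Then for every spanning tree T, Σ_{f∈T} a(i,f) is a constant r(i) independent of T, and Q(T) = Σ_{e∈T} (2r(e) + d(e,e)). Hence Q is linearizable with linearization c(i) = 2r(i) + d(i,i). -/
open Finset

/-- `T` (a finite set of edges) is a spanning tree of the simple graph `G`. -/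
def IsSpanningTree {V : Type*} (G : SimpleGraph V) (T : Finset (Sym2 V)) : Prop :=
  ↑T ⊆ G.edgeSet ∧ (SimpleGraph.fromEdgeSet (↑T : Set (Sym2 V))).IsTree

/-- Quadratic cost of a spanning tree: `Q(T) = ∑_{e∈T} ∑_{f∈T} q(e,f)`. -/
noncomputable def treeCost {V : Type*} (Q : Sym2 V → Sym2 V → ℝ) (T : Finset (Sym2 V)) : ℝ :=
  ∑ e ∈ T, ∑ f ∈ T, Q e f

/-- `c` is a linearization of `Q` on `G`. -/
def IsLinearization {V : Type*} (G : SimpleGraph V) (Q : Sym2 V → Sym2 V → ℝ)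
    (c : Sym2 V → ℝ) : Prop :=
  ∀ T : Finset (Sym2 V), IsSpanningTree G T → treeCost Q T = ∑ e ∈ T, c e

/-- `Q` is linearizable on `G`. -/
def Linearizable {V : Type*} (G : SimpleGraph V) (Q : Sym2 V → Sym2 V → ℝ) : Prop :=
  ∃ c : Sym2 V → ℝ, IsLinearization G Q c


/-- Two edges lie on a common cycle of `G`; for distinct edges this means they belong
to the same biconnected component of `G`. -/
def OnCommonCycle {V : Type*} (G : SimpleGraph V) (e f : Sym2 V) : Prop :=
  ∃ (u : V) (w : G.Walk u u), w.IsCycle ∧ e ∈ w.edges ∧ f ∈ w.edges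

/-!
Let `T, T'` be spanning trees and `e ∈ T \ T'`. Adding `e` to `T'` closes a cycle through `e`; since
`T` is acyclic, that cycle contains an edge `f ∉ T`, and `T' - f + e` is again a spanning tree
(removing an edge that lies on a cycle keeps the graph connected, and the edge count is unchanged).
The edges `e` and `f` lie on a common cycle, so a weight constant on biconnected components gives them
equal weight, and `T' - f + e` is closer to `T`. Hence the sum of such a weight over a spanning tree
does not depend on the tree. Applied to each row of `A`, this makes `Q(T) = ∑_{e,f ∈ T} q(e,f)`
collapse to `∑_{e ∈ T} (2 r(e) + d(e,e))`.
-/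

open SimpleGraph

namespace SimpleGraph

variable {V : Type*} {G : SimpleGraph V}

lemma edgeSet_fromEdgeSet_of_subset {s : Set (Sym2 V)} (hs : s ⊆ G.edgeSet) :
    (fromEdgeSet s).edgeSet = s := by
  rw [edgeSet_fromEdgeSet, sdiff_eq_left, Set.disjoint_left]
  exact fun e he => G.not_isDiag_of_mem_edgeSet (hs he)

lemma Walk.IsCycle.exists_mem_edges_notMem_of_isAcyclic {s : Set (Sym2 V)}
    (hs : (fromEdgeSet s).IsAcyclic) {u : V} {c : G.Walk u u} (hc : c.IsCycle) :
    ∃ f ∈ c.edges, f ∉ s := by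
  by_contra! h
  refine hs _ (hc.transfer fun f hf => ?_)
  rw [edgeSet_fromEdgeSet]
  exact ⟨h f hf, G.not_isDiag_of_mem_edgeSet (c.edges_subset_edgeSet hf)⟩

end SimpleGraph

section SpanningTree

variable {V : Type*} {G : SimpleGraph V}

lemma isSpanningTree_iff_connected_and_card [Finite V] {T : Finset (Sym2 V)} :
    IsSpanningTree G T ↔
      ↑T ⊆ G.edgeSet ∧ (fromEdgeSet (T : Set (Sym2 V))).Connected ∧ #T + 1 = Nat.card V := by
  refine and_congr_right fun hT => ?_
  rw [isTree_iff_connected_and_card, edgeSet_fromEdgeSet_of_subset hT, Nat.card_coe_set_eq,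
    Set.ncard_coe_finset]

lemma IsSpanningTree.exists_isCycle_insert {T : Finset (Sym2 V)} (hT : IsSpanningTree G T)
    {e : Sym2 V} (he : e ∈ G.edgeSet) (heT : e ∉ T) :
    ∃ (u : V) (c : (fromEdgeSet (insert e (T : Set (Sym2 V)))).Walk u u),
      c.IsCycle ∧ e ∈ c.edges := by
  induction e using Sym2.ind with
  | _ u v =>
  refine adj_and_reachable_delete_edges_iff_exists_cycle.mp ⟨?_, ?_⟩
  · exact (fromEdgeSet_adj _).mpr ⟨Set.mem_insert _ _, G.ne_of_adj he⟩
  · refine (hT.2.connected.preconnected u v).mono ?_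
    rw [deleteEdges_fromEdgeSet]
    exact fromEdgeSet_mono fun f hf =>
      ⟨Set.mem_insert_of_mem _ hf, fun hfe => heT (Set.mem_singleton_iff.mp hfe ▸ hf)⟩

lemma IsSpanningTree.exists_exchange [Finite V] [DecidableEq V] {T T' : Finset (Sym2 V)}
    (hT : IsSpanningTree G T) (hT' : IsSpanningTree G T') {e : Sym2 V} (heT : e ∈ T)
    (heT' : e ∉ T') :
    ∃ f ∈ T', f ∉ T ∧ OnCommonCycle G e f ∧ IsSpanningTree G (insert e (T'.erase f)) := by
  set H := fromEdgeSet (insert e (T' : Set (Sym2 V)))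
  have hHG : H ≤ G := G.fromEdgeSet_le.mpr fun f hf => Set.insert_subset (hT.1 heT) hT'.1 hf.1
  obtain ⟨u, c, hc, hec⟩ := hT'.exists_isCycle_insert (hT.1 heT) heT'
  obtain ⟨f, hfc, hfT⟩ := hc.exists_mem_edges_notMem_of_isAcyclic hT.2.isAcyclic
  have hfe : f ≠ e := fun hfe => hfT (hfe ▸ heT)
  have hfT' : f ∈ T' := by
    have hfH := c.edges_subset_edgeSet hfc
    rw [edgeSet_fromEdgeSet] at hfH
    exact hfH.1.resolve_left hfe
  refine ⟨f, hfT', hfT, ⟨u, c.mapLe hHG, hc.mapLe hHG, ?_, ?_⟩, ?_⟩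
  · rwa [Walk.edges_mapLe_eq_edges]
  · rwa [Walk.edges_mapLe_eq_edges]
  rw [isSpanningTree_iff_connected_and_card] at hT' ⊢
  refine ⟨?_, ?_, ?_⟩
  · rw [coe_insert, coe_erase]
    exact Set.insert_subset (hT.1 heT) (Set.sdiff_subset.trans hT'.1)
  · have hH : H.Connected := hT'.2.1.mono (fromEdgeSet_mono (Set.subset_insert _ _))
    have hf_not_bridge : ¬ H.IsBridge f := fun hb =>
      (isBridge_iff_forall_cycle_notMem (c.edges_subset_edgeSet hfc)).mp hb c hc hfc
    induction f using Sym2.ind with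
    | _ x y =>
    have hcon := hH.connected_delete_edge_of_not_isBridge hf_not_bridge
    rwa [deleteEdges_fromEdgeSet, Set.insert_sdiff_of_notMem _ (by simpa using hfe.symm),
      ← coe_erase, ← coe_insert] at hcon
  · rw [card_insert_of_notMem (by simp [heT']), card_erase_add_one hfT']
    exact hT'.2.2

theorem IsSpanningTree.sum_eq_sum [Finite V] {M : Type*} [AddCommMonoid M] {w : Sym2 V → M}
    (hw : ∀ e f, OnCommonCycle G e f → w e = w f) {T T' : Finset (Sym2 V)}
    (hT : IsSpanningTree G T) (hT' : IsSpanningTree G T') :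
    ∑ f ∈ T, w f = ∑ f ∈ T', w f := by
  classical
  induction h : #(T \ T') using Nat.strong_induction_on generalizing T' with
  | _ n ih =>
  obtain hTT' | ⟨e, he⟩ := (T \ T').eq_empty_or_nonempty
  · have hcard := (isSpanningTree_iff_connected_and_card.mp hT).2.2.trans
      (isSpanningTree_iff_connected_and_card.mp hT').2.2.symm
    rw [eq_of_subset_of_card_le (sdiff_eq_empty_iff_subset.mp hTT') (by omega)]
  obtain ⟨heT, heT'⟩ := mem_sdiff.mp he
  obtain ⟨f, hfT', hfT, hef, hT''⟩ := hT.exists_exchange hT' heT heT'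
  have hlt : #(T \ insert e (T'.erase f)) < n := by
    refine h ▸ card_lt_card ((ssubset_iff_of_subset ?_).mpr ⟨e, he, by simp⟩)
    intro g hg
    simp only [mem_sdiff, mem_insert, mem_erase, not_or, not_and_or] at hg ⊢
    exact ⟨hg.1, hg.2.2.resolve_left fun hgf => hfT (not_not.mp hgf ▸ hg.1)⟩
  rw [ih _ hlt hT'' rfl, sum_insert (by simp [heT']), hw e f hef, add_sum_erase _ _ hfT']

end SpanningTree

lemma treeCost_eq_sum_of_rowSum {V : Type*} {Q A D : Sym2 V → Sym2 V → ℝ} {r : Sym2 V → ℝ}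
    {T : Finset (Sym2 V)} (hQ : ∀ e f, Q e f = A e f + A f e + D e f)
    (hD : ∀ e f, e ≠ f → D e f = 0) (hr : ∀ i, ∑ f ∈ T, A i f = r i) :
    treeCost Q T = ∑ e ∈ T, (2 * r e + D e e) := by
  have hcol : ∑ e ∈ T, ∑ f ∈ T, A f e = ∑ e ∈ T, r e := by
    rw [sum_comm]
    exact sum_congr rfl fun e _ => hr e
  have hdiag : ∑ e ∈ T, ∑ f ∈ T, D e f = ∑ e ∈ T, D e e :=
    sum_congr rfl fun e he => sum_eq_single_of_mem e he fun f _ hfe => hD e f hfe.symm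
  simp only [treeCost, hQ, sum_add_distrib, two_mul, hcol, hdiag, hr]

theorem sum_structure_linearizable_general {V : Type*} [Fintype V] (G : SimpleGraph V)
    (Q A D : Sym2 V → Sym2 V → ℝ)
    (hQ : ∀ e f, Q e f = A e f + A f e + D e f)
    (hD : ∀ e f, e ≠ f → D e f = 0)
    (hA : ∀ i j k, OnCommonCycle G j k → A i j = A i k) :
    ∃ r : Sym2 V → ℝ,
      (∀ (i : Sym2 V) (T : Finset (Sym2 V)), IsSpanningTree G T → ∑ f ∈ T, A i f = r i) ∧
      (∀ T : Finset (Sym2 V), IsSpanningTree G T →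
        treeCost Q T = ∑ e ∈ T, (2 * r e + D e e)) ∧
      IsLinearization G Q (fun i => 2 * r i + D i i) := by
  by_cases hex : ∃ T₀, IsSpanningTree G T₀
  · obtain ⟨T₀, hT₀⟩ := hex
    have hr : ∀ i T, IsSpanningTree G T → ∑ f ∈ T, A i f = ∑ f ∈ T₀, A i f :=
      fun i _ hT => hT.sum_eq_sum (hA i) hT₀
    have hcost : ∀ T, IsSpanningTree G T →
        treeCost Q T = ∑ e ∈ T, (2 * ∑ f ∈ T₀, A e f + D e e) :=
      fun T hT => treeCost_eq_sum_of_rowSum hQ hD fun i => hr i T hT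
    exact ⟨_, hr, hcost, hcost⟩
  · rw [not_exists] at hex
    exact ⟨0, fun _ T hT => (hex T hT).elim, fun T hT => (hex T hT).elim,
      fun T hT => (hex T hT).elim⟩

/-- Sufficient condition for linearizability (Lemma 6): if `Q = A + Aᵀ + D` where `D` is
diagonal and each row of `A` is constant on every biconnected component, then the row sums
`r(i) = ∑_{f ∈ T} A i f` are independent of the spanning tree `T`,
`Q(T) = ∑_{e ∈ T} (2 r(e) + d(e,e))`, and `c(i) = 2 r(i) + d(i,i)` linearizes `Q`. -/
theorem sum_structure_linearizable {V : Type*} [Fintype V] (G : SimpleGraph V)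
    (hconn : G.Connected) (Q A D : Sym2 V → Sym2 V → ℝ)
    (hsymm : ∀ e f, Q e f = Q f e)
    (hQ : ∀ e f, Q e f = A e f + A f e + D e f)
    (hD : ∀ e f, e ≠ f → D e f = 0)
    (hA : ∀ i j k, OnCommonCycle G j k → A i j = A i k) :
    ∃ r : Sym2 V → ℝ,
      (∀ (i : Sym2 V) (T : Finset (Sym2 V)), IsSpanningTree G T → ∑ f ∈ T, A i f = r i) ∧
      (∀ T : Finset (Sym2 V), IsSpanningTree G T →
        treeCost Q T = ∑ e ∈ T, (2 * r e + D e e)) ∧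
      IsLinearization G Q (fun i => 2 * r i + D i i) :=
  sum_structure_linearizable_general G Q A D hQ hD hA
end

section
/- A symmetric cost matrix Q for the QMSTP on the complete graph K_n is linearizable if and only if Q is a symmetric weak sum matrix, i.e., there exists a vector w with q(i,j) = w(i) + w(j) for all distinct edges i ≠ j. -/
open Finset

/-!
If `q(e, f) = w e + w f` off the diagonal, a spanning tree `T` of `K_n` has `n - 1` edges, so
`Q(T) = ∑_{e ∈ T} (q(e, e) + 2 (n - 2) w e)` is linear.

Conversely, let `c` linearize `Q`. If `S ∪ {e, g}`, `S ∪ {e', g}`, `S ∪ {e, g'}` and `S ∪ {e', g'}`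
are all spanning trees, comparing their costs gives
`q(e, g) - q(e', g) = q(e, g') - q(e', g')`. With `S` the star at a vertex `a` over all vertices
but `u` and `w`, this holds for `e, e'` at `u` and `g, g'` at `w`. Chaining such moves gives it for
all edges with `{e, e'} ∩ {g, g'} = ∅`, and a symmetric matrix with this property is a weak sum
matrix.
-/

section WeakSum

variable {α : Type*} {Q : α → α → ℝ}

def RowDiffInvariant (s : Set α) (Q : α → α → ℝ) : Prop :=
  ∀ e ∈ s, ∀ e' ∈ s, ∀ g ∈ s, ∀ g' ∈ s, e ≠ g → e ≠ g' → e' ≠ g → e' ≠ g' →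
    Q e g - Q e' g = Q e g' - Q e' g'

namespace RowDiffInvariant

variable {s : Set α}

theorem add_sub_eq (hQ : RowDiffInvariant s Q) (hsymm : ∀ e f, Q e f = Q f e) {e f g f' g' : α}
    (he : e ∈ s) (hf : f ∈ s) (hg : g ∈ s) (hf' : f' ∈ s) (hg' : g' ∈ s)
    (hfe : f ≠ e) (hge : g ≠ e) (hfg : f ≠ g) (hf'e : f' ≠ e) (hg'e : g' ≠ e) (hfg' : f' ≠ g') :
    Q e f + Q e g - Q f g = Q e f' + Q e g' - Q f' g' := by
  have move {f g g'} (hf : f ∈ s) (hg : g ∈ s) (hg' : g' ∈ s) (hfe : f ≠ e) (hge : g ≠ e)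
      (hg'e : g' ≠ e) (hgf : g ≠ f) (hg'f : g' ≠ f) :
      Q e f + Q e g - Q f g = Q e f + Q e g' - Q f g' := by
    linarith [hQ e he f hf g hg g' hg' hge.symm hg'e.symm hgf.symm hg'f.symm]
  have comm (f g : α) : Q e f + Q e g - Q f g = Q e g + Q e f - Q g f := by
    rw [hsymm f g]; ring
  rcases eq_or_ne g' f with rfl | hg'f
  · rw [move hf hg hf' hfe hge hf'e hfg.symm hfg', comm]
  · rw [move hf hg hg' hfe hge hg'e hfg.symm hg'f, comm,
      move hg' hf hf' hg'e hfe hf'e (Ne.symm hg'f) hfg', comm]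

/-- The witness is `w e = (Q e f + Q e g - Q f g) / 2` for any `f ≠ g` in `s` other than `e`;
by `add_sub_eq` this does not depend on the choice of `f` and `g`. -/
theorem exists_weakSum (hQ : RowDiffInvariant s Q) (hsymm : ∀ e f, Q e f = Q f e) :
    ∃ w : α → ℝ, ∀ e ∈ s, ∀ f ∈ s, e ≠ f → Q e f = w e + w f := by
  by_cases hpair : ∃ e ∈ s, ∃ f ∈ s, e ≠ f ∧ ∀ g ∈ s, g = e ∨ g = f
  · obtain ⟨e, he, f, hf, hef, hs⟩ := hpair
    refine ⟨fun _ => Q e f / 2, fun x hx y hy hxy => ?_⟩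
    rcases hs x hx with rfl | rfl <;> rcases hs y hy with rfl | rfl
    all_goals first | exact absurd rfl hxy | (rw [hsymm y x]; ring) | ring
  push Not at hpair
  have anchor (e : α) : ∃ f g : α, (∃ f ∈ s, ∃ g ∈ s, f ≠ e ∧ g ≠ e ∧ f ≠ g) →
      f ∈ s ∧ g ∈ s ∧ f ≠ e ∧ g ≠ e ∧ f ≠ g := by
    by_cases h : ∃ f ∈ s, ∃ g ∈ s, f ≠ e ∧ g ≠ e ∧ f ≠ g
    · obtain ⟨f, hf, g, hg, hfg⟩ := h
      exact ⟨f, g, fun _ => ⟨hf, hg, hfg⟩⟩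
    · exact ⟨e, e, fun h' => absurd h' h⟩
  choose F G hFG using anchor
  have hw {e f g} (he : e ∈ s) (hf : f ∈ s) (hg : g ∈ s) (hfe : f ≠ e) (hge : g ≠ e)
      (hfg : f ≠ g) : Q e (F e) + Q e (G e) - Q (F e) (G e) = Q e f + Q e g - Q f g := by
    obtain ⟨hF, hG, hFe, hGe, hFG⟩ := hFG e ⟨f, hf, g, hg, hfe, hge, hfg⟩
    exact hQ.add_sub_eq hsymm he hF hG hf hg hFe hGe hFG hfe hge hfg
  refine ⟨fun e => (Q e (F e) + Q e (G e) - Q (F e) (G e)) / 2, fun e he f hf hef => ?_⟩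
  obtain ⟨g, hg, hge, hgf⟩ := hpair e he f hf hef
  simp only [hw he hf hg (Ne.symm hef) hge (Ne.symm hgf), hw hf he hg hef hgf (Ne.symm hge)]
  rw [hsymm f e]
  ring

end RowDiffInvariant

theorem sum_sum_eq_of_weakSum [DecidableEq α] (T : Finset α) (w : α → ℝ)
    (hw : ∀ e ∈ T, ∀ f ∈ T, e ≠ f → Q e f = w e + w f) :
    ∑ e ∈ T, ∑ f ∈ T, Q e f = ∑ e ∈ T, (Q e e + 2 * ((#T : ℝ) - 1) * w e) := by
  have row : ∀ e ∈ T, ∑ f ∈ T, Q e f = Q e e + (#T - 1) * w e + (∑ f ∈ T, w f - w e) := by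
    intro e he
    rw [← add_sum_erase _ _ he, sum_congr rfl fun f hf => hw e he f (mem_of_mem_erase hf)
      (ne_of_mem_erase hf).symm, sum_add_distrib, sum_const, card_erase_of_mem he,
      sum_erase_eq_sub he, nsmul_eq_mul, Nat.cast_pred (card_pos.2 ⟨e, he⟩)]
    ring
  rw [sum_congr rfl row]
  simp only [sum_add_distrib, sum_sub_distrib, ← mul_sum, sum_const, nsmul_eq_mul]
  ring

end WeakSum

namespace SimpleGraph

variable {V : Type*}

lemma mem_edgeSet_top_iff {e : Sym2 V} : e ∈ (⊤ : SimpleGraph V).edgeSet ↔ ¬ e.IsDiag := by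
  rw [edgeSet_top, Set.mem_compl_iff, Sym2.mem_diagSet]

lemma isSpanningTree_top_iff [Fintype V] {T : Finset (Sym2 V)} :
    IsSpanningTree ⊤ T ↔
      (∀ e ∈ T, ¬ e.IsDiag) ∧ (fromEdgeSet (T : Set (Sym2 V))).Connected ∧
        #T + 1 = Fintype.card V := by
  unfold IsSpanningTree
  rw [show (T : Set (Sym2 V)) ⊆ (⊤ : SimpleGraph V).edgeSet ↔ ∀ e ∈ T, ¬ e.IsDiag by
    simp [Set.subset_def]]
  refine and_congr_right fun hT => ?_
  have hE : (fromEdgeSet (T : Set (Sym2 V))).edgeSet = T := by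
    rw [edgeSet_fromEdgeSet, sdiff_eq_left, Set.disjoint_left]
    exact fun e he => hT e he
  rw [isTree_iff_connected_and_card, hE, Nat.card_coe_set_eq, Set.ncard_coe_finset,
    Nat.card_eq_fintype_card]

end SimpleGraph

open SimpleGraph

section Linearization

variable {V : Type*} [DecidableEq V] {G : SimpleGraph V} {Q : Sym2 V → Sym2 V → ℝ}
  {c : Sym2 V → ℝ}

lemma treeCost_insert (hsymm : ∀ e f, Q e f = Q f e) {S : Finset (Sym2 V)} {e : Sym2 V}
    (he : e ∉ S) : treeCost Q (insert e S) = treeCost Q S + 2 * ∑ f ∈ S, Q e f + Q e e := by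
  simp only [treeCost, sum_insert he, sum_add_distrib]
  rw [sum_congr rfl fun f _ => hsymm f e]
  ring

lemma IsLinearization.exchange (hsymm : ∀ e f, Q e f = Q f e) (hc : IsLinearization G Q c)
    {S : Finset (Sym2 V)} {e e' : Sym2 V} (he : e ∉ S) (he' : e' ∉ S)
    (hT : IsSpanningTree G (insert e S)) (hT' : IsSpanningTree G (insert e' S)) :
    Q e e + 2 * ∑ f ∈ S, Q e f - c e = Q e' e' + 2 * ∑ f ∈ S, Q e' f - c e' := by
  have h := hc _ hT
  have h' := hc _ hT'
  rw [treeCost_insert hsymm he, sum_insert he] at h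
  rw [treeCost_insert hsymm he', sum_insert he'] at h'
  linarith

lemma IsLinearization.rectangle (hsymm : ∀ e f, Q e f = Q f e) (hc : IsLinearization G Q c)
    {S : Finset (Sym2 V)} {e e' g g' : Sym2 V} (hg : g ∉ S) (hg' : g' ∉ S)
    (heg : e ∉ insert g S) (he'g : e' ∉ insert g S)
    (heg' : e ∉ insert g' S) (he'g' : e' ∉ insert g' S)
    (h₁ : IsSpanningTree G (insert e (insert g S))) (h₂ : IsSpanningTree G (insert e' (insert g S)))
    (h₃ : IsSpanningTree G (insert e (insert g' S)))
    (h₄ : IsSpanningTree G (insert e' (insert g' S))) :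
    Q e g - Q e' g = Q e g' - Q e' g' := by
  have H := hc.exchange hsymm heg he'g h₁ h₂
  have H' := hc.exchange hsymm heg' he'g' h₃ h₄
  rw [sum_insert hg, sum_insert hg] at H
  rw [sum_insert hg', sum_insert hg'] at H'
  linarith

end Linearization

section CompleteGraph

variable {V : Type*} [Fintype V] [DecidableEq V]

def parentTree (p : V → V) (r : V) : Finset (Sym2 V) :=
  (univ.erase r).image fun x => s(x, p x)

theorem isSpanningTree_parentTree {p : V → V} {r : V} (ρ : V → ℕ)
    (hρ : ∀ x ≠ r, ρ (p x) < ρ x) : IsSpanningTree ⊤ (parentTree p r) := by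
  have hne : ∀ x ≠ r, p x ≠ x := fun x hx h => (hρ x hx).ne (by rw [h])
  refine isSpanningTree_top_iff.2 ⟨?_, ?_, ?_⟩
  · simp only [parentTree, mem_image, mem_erase, mem_univ, and_true]
    rintro _ ⟨x, hx, rfl⟩
    exact Sym2.mk_isDiag_iff.not.2 (hne x hx).symm
  · have hreach (x : V) : (fromEdgeSet (parentTree p r : Set (Sym2 V))).Reachable x r := by
      induction hn : ρ x using Nat.strong_induction_on generalizing x with
      | _ n ih =>
        by_cases hx : x = r
        · rw [hx]
        · have hadj : (fromEdgeSet (parentTree p r : Set (Sym2 V))).Adj x (p x) :=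
            (fromEdgeSet_adj _).2
              ⟨mem_image_of_mem _ (mem_erase.2 ⟨hx, mem_univ x⟩), (hne x hx).symm⟩
          exact hadj.reachable.trans (ih _ (hn ▸ hρ x hx) _ rfl)
    have : Nonempty V := ⟨r⟩
    exact ⟨fun x y => (hreach x).trans (hreach y).symm⟩
  · rw [parentTree, card_image_of_injOn, card_erase_of_mem (mem_univ r), card_univ]
    · have : 0 < Fintype.card V := Fintype.card_pos_iff.2 ⟨r⟩
      omega
    · intro x hx y hy hxy
      simp only [coe_erase, coe_univ, Set.mem_sdiff, Set.mem_univ, Set.mem_singleton_iff,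
        true_and] at hx hy
      rcases Sym2.eq_iff.1 hxy with ⟨h, -⟩ | ⟨h₁, h₂⟩
      · exact h
      · have hx' := hρ x hx
        have hy' := hρ y hy
        rw [h₂] at hx'
        rw [← h₁] at hy'
        omega

def starCompl (r : V) (K : Finset V) : Finset (Sym2 V) :=
  (univ \ K).image fun z => s(z, r)

lemma mk_notMem_starCompl {r u x : V} {K : Finset V} (hu : u ∈ K) (hur : u ≠ r) :
    s(u, x) ∉ starCompl r K := by
  simp only [starCompl, mem_image, mem_sdiff, mem_univ, true_and, not_exists, not_and]
  intro z hz h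
  rcases Sym2.eq_iff.1 h with ⟨rfl, -⟩ | ⟨-, rfl⟩ <;> contradiction

theorem isSpanningTree_pendant {r u w a b : V} (hur : u ≠ r) (hwr : w ≠ r) (huw : u ≠ w)
    (hau : a ≠ u) (hbw : b ≠ w) (hab : a = w → b ≠ u) :
    IsSpanningTree ⊤ (insert s(u, a) (insert s(w, b) (starCompl r {r, u, w}))) := by
  set p : V → V := fun z => if z = u then a else if z = w then b else r
  have hp : insert s(u, a) (insert s(w, b) (starCompl r {r, u, w})) = parentTree p r := by
    have hdom : univ.erase r = insert u (insert w (univ \ {r, u, w})) := by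
      ext z; by_cases z = u <;> by_cases z = w <;> simp_all
    rw [parentTree, hdom, image_insert, image_insert, starCompl]
    congr 2
    · simp [p]
    · simp [p, huw.symm]
    · refine image_congr fun z hz => ?_
      simp only [coe_sdiff, coe_univ, coe_insert, coe_singleton, Set.mem_sdiff, Set.mem_univ,
        Set.mem_insert_iff, Set.mem_singleton_iff, not_or, true_and] at hz
      simp [p, hz.2.1, hz.2.2]
  rw [hp]
  refine isSpanningTree_parentTree (fun z => if z = r then 0 else if z = u then
    (if a = w then 3 else 2) else if z = w then (if b = u then 3 else 2) else 1) fun x hx => ?_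
  simp only [p]
  split_ifs <;> simp_all

variable {Q : Sym2 V → Sym2 V → ℝ} {c : Sym2 V → ℝ}

theorem IsLinearization.rectangle_pendant (hsymm : ∀ e f, Q e f = Q f e)
    (hc : IsLinearization ⊤ Q c) {u w a a' b b' : V} (huw : u ≠ w) (hau : a ≠ u) (haw : a ≠ w)
    (ha'u : a' ≠ u) (ha'w : a' ≠ w) (hbw : b ≠ w) (hb'w : b' ≠ w) :
    Q s(u, a) s(w, b) - Q s(u, a') s(w, b) = Q s(u, a) s(w, b') - Q s(u, a') s(w, b') := by
  set S := starCompl a {a, u, w}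
  have tree {x y : V} (hxu : x ≠ u) (hxw : x ≠ w) (hyw : y ≠ w) :
      IsSpanningTree ⊤ (insert s(u, x) (insert s(w, y) S)) :=
    isSpanningTree_pendant hau.symm haw.symm huw hxu hyw (absurd · hxw)
  have notMem_S (x : V) : s(w, x) ∉ S := mk_notMem_starCompl (by simp) haw.symm
  have notMem {x y : V} (hxw : x ≠ w) : s(u, x) ∉ insert s(w, y) S := by
    rw [mem_insert, not_or, Sym2.eq_iff]
    exact ⟨by tauto, mk_notMem_starCompl (by simp) hau.symm⟩
  exact hc.rectangle hsymm (notMem_S b) (notMem_S b') (notMem haw) (notMem ha'w) (notMem haw)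
    (notMem ha'w) (tree hau haw hbw) (tree ha'u ha'w hbw) (tree hau haw hb'w) (tree ha'u ha'w hb'w)

theorem IsLinearization.sub_eq_sub_of_adj (hsymm : ∀ e f, Q e f = Q f e)
    (hc : IsLinearization ⊤ Q c) {u x x' : V} (hxu : x ≠ u) (hx'u : x' ≠ u) {g g' : Sym2 V}
    (hg : ¬ g.IsDiag) (hg' : ¬ g'.IsDiag) (hgx : g ≠ s(u, x)) (hgx' : g ≠ s(u, x'))
    (hg'x : g' ≠ s(u, x)) (hg'x' : g' ≠ s(u, x')) :
    Q s(u, x) g - Q s(u, x') g = Q s(u, x) g' - Q s(u, x') g' := by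
  rcases eq_or_ne x x' with rfl | hxx'
  · simp
  have triangle {y : V} (hyu : y ≠ u) (hyx : y ≠ x) :
      Q s(u, x) s(x, y) - Q s(u, x') s(x, y) = Q s(u, x) s(x, x') - Q s(u, x') s(x, x') := by
    have h := hc.rectangle_pendant hsymm (w := u) (b := x) (b' := x') hxu hxx'.symm hx'u hyx hyu
      hxu hx'u
    rw [hsymm s(x, x'), hsymm s(x, x'), hsymm s(x, y), hsymm s(x, y)] at h
    linarith
  have star {p q : V} (hpu : p ≠ u) (hpx : p ≠ x) (hpx' : p ≠ x') (hqp : q ≠ p) :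
      Q s(u, x) s(p, q) - Q s(u, x') s(p, q) = Q s(u, x) s(x, x') - Q s(u, x') s(x, x') := by
    have h := hc.rectangle_pendant hsymm (b := q) (b' := x) hpu.symm hxu hpx.symm hx'u hpx'.symm
      hqp hpx.symm
    rw [h, Sym2.eq_swap (a := p)]
    exact triangle hpu hpx
  have reduce {g : Sym2 V} (hg : ¬ g.IsDiag) (hgx : g ≠ s(u, x)) (hgx' : g ≠ s(u, x')) :
      Q s(u, x) g - Q s(u, x') g = Q s(u, x) s(x, x') - Q s(u, x') s(x, x') := by
    induction g using Sym2.ind with | _ p q => ?_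
    rw [Sym2.mk_isDiag_iff] at hg
    by_cases hp : p ≠ u ∧ p ≠ x ∧ p ≠ x'
    · exact star hp.1 hp.2.1 hp.2.2 (Ne.symm hg)
    by_cases hq : q ≠ u ∧ q ≠ x ∧ q ≠ x'
    · rw [Sym2.eq_swap (a := p)]
      exact star hq.1 hq.2.1 hq.2.2 hg
    simp only [not_and_or, not_not] at hp hq
    rcases hp with rfl | rfl | rfl <;> rcases hq with rfl | rfl | rfl <;>
      simp_all [Sym2.eq_swap]
  rw [reduce hg hgx hgx', reduce hg' hg'x hg'x']

theorem IsLinearization.sub_eq_sub_of_mem (hsymm : ∀ e f, Q e f = Q f e)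
    (hc : IsLinearization ⊤ Q c) {e e' g g' : Sym2 V} {x y : V} (hx : x ∈ e) (hy : y ∈ e')
    (hxy : x ≠ y) (he : ¬ e.IsDiag) (he' : ¬ e'.IsDiag) (hg : ¬ g.IsDiag) (hg' : ¬ g'.IsDiag)
    (heg : e ≠ g) (heg' : e ≠ g') (he'g : e' ≠ g) (he'g' : e' ≠ g')
    (hxyg : s(x, y) ≠ g) (hxyg' : s(x, y) ≠ g') :
    Q e g - Q e' g = Q e g' - Q e' g' := by
  obtain ⟨x₂, rfl⟩ := Sym2.mem_iff_exists.1 hx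
  obtain ⟨y₂, rfl⟩ := Sym2.mem_iff_exists.1 hy
  rw [Sym2.mk_isDiag_iff] at he he'
  have h₁ := hc.sub_eq_sub_of_adj hsymm (Ne.symm he) hxy.symm hg hg' heg.symm hxyg.symm
    heg'.symm hxyg'.symm
  have h₂ := hc.sub_eq_sub_of_adj hsymm hxy (Ne.symm he') hg hg'
    (by rwa [Sym2.eq_swap, ne_comm]) he'g.symm (by rwa [Sym2.eq_swap, ne_comm]) he'g'.symm
  rw [Sym2.eq_swap (a := y)] at h₂
  linarith

theorem IsLinearization.rowDiffInvariant (hsymm : ∀ e f, Q e f = Q f e)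
    (hc : IsLinearization ⊤ Q c) : RowDiffInvariant (⊤ : SimpleGraph V).edgeSet Q := by
  intro e he e' he' g hg g' hg' heg heg' he'g he'g'
  rw [mem_edgeSet_top_iff] at he he' hg hg'
  have through {x y : V} (hx : x ∈ e) (hy : y ∈ e') (hxy : x ≠ y) :=
    hc.sub_eq_sub_of_mem hsymm hx hy hxy he he' hg hg' heg heg' he'g he'g'
  induction e using Sym2.ind with | _ a b => ?_
  induction e' using Sym2.ind with | _ c d => ?_
  rw [Sym2.mk_isDiag_iff] at he he'
  have hba : s(b, a) ≠ g ∧ s(b, a) ≠ g' := by rw [Sym2.eq_swap]; exact ⟨heg, heg'⟩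
  by_cases hac : a = c
  · subst hac
    exact through (Sym2.mem_mk_right a b) (Sym2.mem_mk_left a d) (Ne.symm he) hba.1 hba.2
  by_cases had : a = d
  · subst had
    exact through (Sym2.mem_mk_right a b) (Sym2.mem_mk_right c a) (Ne.symm he) hba.1 hba.2
  by_cases hbc : b = c
  · subst hbc
    exact through (Sym2.mem_mk_left a b) (Sym2.mem_mk_left b d) he heg heg'
  by_cases hbd : b = d
  · subst hbd
    exact through (Sym2.mem_mk_left a b) (Sym2.mem_mk_right c b) he heg heg'
  -- `e` and `e'` are disjoint: one of the three edges `ac`, `ad`, `bc` avoids both `g` and `g'`.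
  by_cases h₁ : s(a, c) ≠ g ∧ s(a, c) ≠ g'
  · exact through (Sym2.mem_mk_left a b) (Sym2.mem_mk_left c d) hac h₁.1 h₁.2
  by_cases h₂ : s(a, d) ≠ g ∧ s(a, d) ≠ g'
  · exact through (Sym2.mem_mk_left a b) (Sym2.mem_mk_right c d) had h₂.1 h₂.2
  have hacd : s(a, c) ≠ s(a, d) := fun h => he' (Sym2.congr_right.1 h)
  have hbca : s(b, c) ≠ s(a, c) := fun h => he (Sym2.congr_left.1 h).symm
  have hbcd : s(b, c) ≠ s(a, d) := by rw [Ne, Sym2.eq_iff]; tauto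
  have hbc' := through (Sym2.mem_mk_right a b) (Sym2.mem_mk_left c d) hbc
  simp only [not_and_or, not_not] at h₁ h₂
  rcases h₁ with h₁ | h₁ <;> rcases h₂ with h₂ | h₂
  · exact absurd (h₁.trans h₂.symm) hacd
  · exact hbc' (h₁ ▸ hbca) (h₂ ▸ hbcd)
  · exact hbc' (h₂ ▸ hbcd) (h₁ ▸ hbca)
  · exact absurd (h₁.trans h₂.symm) hacd

theorem isLinearization_of_weakSum (w : Sym2 V → ℝ)
    (hw : ∀ e ∈ (⊤ : SimpleGraph V).edgeSet, ∀ f ∈ (⊤ : SimpleGraph V).edgeSet,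
      e ≠ f → Q e f = w e + w f) :
    IsLinearization ⊤ Q fun e => Q e e + 2 * ((Fintype.card V : ℝ) - 2) * w e := by
  intro T hT
  obtain ⟨hdiag, -, hcard⟩ := isSpanningTree_top_iff.1 hT
  have hT' (e : Sym2 V) (he : e ∈ T) := mem_edgeSet_top_iff.2 (hdiag e he)
  rw [treeCost, sum_sum_eq_of_weakSum T w fun e he f hf => hw e (hT' e he) f (hT' f hf)]
  have hn : (Fintype.card V : ℝ) = #T + 1 := by exact_mod_cast hcard.symm
  exact sum_congr rfl fun e _ => by rw [hn]; ring

end CompleteGraph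

/-- On the complete graph, a symmetric cost matrix is linearizable iff it is a symmetric
weak sum matrix on the edges. -/
theorem complete_graph_linearizable_iff {V : Type*} [Fintype V]
    (Q : Sym2 V → Sym2 V → ℝ) (hsymm : ∀ e f, Q e f = Q f e) :
    Linearizable (⊤ : SimpleGraph V) Q ↔
      ∃ w : Sym2 V → ℝ, ∀ e f : Sym2 V, e ∈ (⊤ : SimpleGraph V).edgeSet →
        f ∈ (⊤ : SimpleGraph V).edgeSet → e ≠ f → Q e f = w e + w f := by
  classical
  constructor
  · rintro ⟨c, hc⟩
    obtain ⟨w, hw⟩ := (hc.rowDiffInvariant hsymm).exists_weakSum hsymm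
    exact ⟨w, fun e f he hf => hw e he f hf⟩
  · rintro ⟨w, hw⟩
    exact ⟨_, isLinearization_of_weakSum w fun e he f hf => hw e f he hf⟩
end

section
/- Let T be a spanning tree of a simple graph G and let e be an edge of G joining two vertices of T with e ∉ T. Then every cost matrix Q for the QMSTP on the graph H = T ∪ {e} is linearizable. -/
open Finset

/-!
A spanning tree of a graph on `n` vertices has `n - 1` edges, and `H = T ∪ {e}` has exactly `n`
edges, so every spanning tree of `H` is `E(H) ∖ {f}` for an edge `f` of a set `R ⊆ E(H)` (the
cycle). Hence `Q` takes only the values `D f = Q(E(H) ∖ {f})`, `f ∈ R`, on spanning trees, and a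
linearization is a solution `c` of the linear system `c(E(H)) - c(f) = D f` for `f ∈ R`. For
`|R| ≥ 2` it is solved by `c = S - D` on `R` and `c = 0` elsewhere, where `(|R| - 1) S = ∑_R D`;
for `|R| ≤ 1` a single nonzero entry off `R` suffices.
-/

open SimpleGraph

section

variable {V : Type*}

lemma SimpleGraph.support_fromEdgeSet_subset [DecidableEq V] (s : Finset (Sym2 V)) :
    (fromEdgeSet (s : Set (Sym2 V))).support ⊆ ↑(s.biUnion Sym2.toFinset) := by
  intro v hv
  obtain ⟨w, hvw, -⟩ := hv
  simp only [coe_biUnion, mem_coe, Set.mem_iUnion, Sym2.mem_toFinset]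
  exact ⟨_, hvw, Sym2.mem_mk_left _ _⟩

lemma SimpleGraph.Preconnected.finite_of_fromEdgeSet [DecidableEq V] [Nontrivial V]
    {s : Finset (Sym2 V)} (h : (fromEdgeSet (s : Set (Sym2 V))).Preconnected) : Finite V := by
  rw [← Set.finite_univ_iff, ← h.support_eq_univ]
  exact (s.biUnion Sym2.toFinset).finite_toSet.subset (support_fromEdgeSet_subset s)

lemma IsSpanningTree.card_add_one [Fintype V] {G : SimpleGraph V} {T : Finset (Sym2 V)}
    (hT : IsSpanningTree G T) : #T + 1 = Fintype.card V := by
  classical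
  have hedges : (fromEdgeSet (T : Set (Sym2 V))).edgeFinset = T := by
    refine coe_injective ?_
    rw [coe_edgeFinset, edgeSet_fromEdgeSet, sdiff_eq_left, Set.disjoint_left]
    exact fun f hf => G.not_isDiag_of_mem_edgeSet (hT.1 hf)
  rw [← hedges]
  exact hT.2.card_edgeFinset

lemma IsSpanningTree.exists_eq_erase [DecidableEq V] [Fintype V] {E T : Finset (Sym2 V)}
    (hE : #E = Fintype.card V) (hT : IsSpanningTree (fromEdgeSet (E : Set (Sym2 V))) T) :
    ∃ f ∈ E, T = E.erase f := by
  have hTE : T ⊆ E := by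
    have := hT.1
    rw [edgeSet_fromEdgeSet] at this
    exact coe_subset.mp (this.trans Set.sdiff_subset)
  obtain ⟨f, hfT, hinsert⟩ := exists_eq_insert_iff.mpr ⟨hTE, hE ▸ hT.card_add_one⟩
  exact ⟨f, hinsert ▸ mem_insert_self f T, by rw [← hinsert, erase_insert hfT]⟩

lemma Finset.exists_sum_erase_eq {α : Type*} [DecidableEq α] {E R : Finset α} (hRE : R ⊆ E)
    (hE : 1 < #E) (D : α → ℝ) : ∃ c : α → ℝ, ∀ f ∈ R, ∑ a ∈ E.erase f, c a = D f := by
  obtain hR | hR := le_or_gt #R 1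
  · have : Nonempty α := (card_pos.mp (zero_lt_one.trans hE)).to_type
    obtain ⟨f, hRf⟩ := card_le_one_iff_subset_singleton.mp hR
    obtain ⟨g, hgE, hgf⟩ := (one_lt_card_iff_nontrivial.mp hE).exists_ne f
    refine ⟨Pi.single g (D f), fun f' hf' => ?_⟩
    rw [mem_singleton.mp (hRf hf'), sum_pi_single', if_pos (mem_erase.mpr ⟨hgf, hgE⟩)]
  · set S := (∑ a ∈ R, D a) / (#R - 1 : ℝ)
    have hS : (#R - 1 : ℝ) * S = ∑ a ∈ R, D a := by
      have : (1 : ℝ) < #R := by exact_mod_cast hR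
      exact mul_div_cancel₀ _ (sub_pos.mpr this).ne'
    refine ⟨fun a => if a ∈ R then S - D a else 0, fun f hf => ?_⟩
    rw [sum_ite_mem, erase_inter, inter_eq_right.mpr hRE, sum_erase_eq_sub hf, sum_sub_distrib,
      sum_const, nsmul_eq_mul]
    linarith

end

/-- Every cost matrix of the QMSTP on a spanning tree plus one extra edge is
linearizable. -/
theorem tree_plus_edge_linearizable {V : Type*} [DecidableEq V] (G : SimpleGraph V)
    (T : Finset (Sym2 V)) (hT : IsSpanningTree G T)
    (e : Sym2 V) (he : e ∈ G.edgeSet) (heT : e ∉ T)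
    (Q : Sym2 V → Sym2 V → ℝ) :
    Linearizable (SimpleGraph.fromEdgeSet (↑(insert e T) : Set (Sym2 V))) Q := by
  classical
  have : Nontrivial V := by
    induction e using Sym2.ind with
    | h x y => exact nontrivial_of_ne x y (G.mem_edgeSet.mp he).ne
  have := hT.2.connected.preconnected.finite_of_fromEdgeSet
  cases nonempty_fintype V
  set E := insert e T
  have hE : #E = Fintype.card V := by rw [card_insert_of_notMem heT, hT.card_add_one]
  obtain ⟨c, hc⟩ := exists_sum_erase_eq
    (filter_subset (fun f => IsSpanningTree (fromEdgeSet (E : Set (Sym2 V))) (E.erase f)) E)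
    (hE ▸ Fintype.one_lt_card) (fun f => treeCost Q (E.erase f))
  refine ⟨c, fun T' hT' => ?_⟩
  obtain ⟨f, hf, rfl⟩ := hT'.exists_eq_erase hE
  exact (hc f (mem_filter.mpr ⟨hf, hT'⟩)).symm
end
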